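/- arXiv:1203.0328 — 2 statements merged into one kernel-verified Lean document; each statement's English description precedes it below -/
import Mathlib

section
/- Let μ and ν be two roots of a complex semisimple Lie algebra g. Then [g_μ, g_ν] = g_{μ+ν}; in particular, μ + ν is a root if and only if [ζ, ξ] ≠ 0 for every nonzero ζ ∈ g_μ and nonzero ξ ∈ g_ν. -/
/-!
Over `ℂ` a semisimple Lie algebra has nondegenerate Killing form (Cartan's criterion), so its
nonzero roots have one-dimensional root spaces and come with `sl₂`-triples `(h, e, f)`,
`e ∈ g_α`, `f ∈ g_{-α}`. If `α + β` is a root, the `α`-string through `β` extends above `β`: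
if `x` is a primitive vector at the top of the string, of weight `n` for `h`, and `k + 1 ≥ 1`
is the distance from `β` to the top, then `y = f^(k+1) x ∈ g_β` satisfies
`⁅e, y⁆ = (k + 1)(n - k) f^k x ≠ 0`. Since all the spaces involved are lines, one nonzero bracket
makes every bracket of nonzero vectors nonzero and fills `g_{α+β}`.
-/

open LieModule Module

namespace LieAlgebra.IsKilling

variable {K L : Type*} [Field K] [CharZero K] [LieRing L] [LieAlgebra K L]
  [IsKilling K L] [FiniteDimensional K L]
  {H : LieSubalgebra K L} [H.IsCartanSubalgebra] [IsTriangularizable K H L]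

lemma exists_smul_eq_of_mem_rootSpace {α : Weight K H L} (hα : α.IsNonZero)
    {x z : L} (hx : x ∈ rootSpace H α) (hx₀ : x ≠ 0) (hz : z ∈ rootSpace H α) :
    ∃ c : K, c • x = z := by
  obtain ⟨c, hc⟩ := (finrank_eq_one_iff_of_nonzero' (⟨x, hx⟩ : rootSpace H α)
    (by simpa using hx₀)).mp (finrank_rootSpace_eq_one α hα) ⟨z, hz⟩
  exact ⟨c, congrArg Subtype.val hc⟩

lemma exists_lie_ne_zero_of_rootSpace_add_ne_bot {α β : Weight K H L} (hα : α.IsNonZero)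
    (hαβ : rootSpace H (⇑α + ⇑β) ≠ ⊥) :
    ∃ x ∈ rootSpace H α, ∃ y ∈ rootSpace H β, ⁅x, y⁆ ≠ 0 := by
  obtain ⟨h, e, f, isSl2, he, hf⟩ := exists_isSl2Triple_of_weight_isNonZero hα
  obtain rfl := isSl2.h_eq_coroot hα he hf
  obtain ⟨x, hx, hx₀⟩ := (chainTop α β).exists_ne_zero
  have prim : isSl2.HasPrimitiveVectorWith x (chainLength α β : K) :=
    have := lie_mem_genWeightSpace_of_mem_genWeightSpace he hx
    ⟨hx₀, (chainLength_smul _ _ hx).symm, by rwa [genWeightSpace_add_chainTop _ _ hα] at this⟩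
  obtain ⟨k, hk⟩ : ∃ k, chainTopCoeff α β = k + 1 := by
    have := ((rootSpace_zsmul_add_ne_bot_iff α β hα 1).mp (by simpa using hαβ)).1
    exact ⟨chainTopCoeff α β - 1, by omega⟩
  have hkn : k + 1 ≤ chainLength α β := hk ▸ chainTopCoeff_le_chainLength α β
  refine ⟨e, he, (toEnd K L L f ^ (k + 1)) x, ?_, ?_⟩
  · have := toEnd_pow_apply_mem hf hx (k + 1)
    rwa [coe_chainTop, hk, ← add_assoc, smul_neg, ← Nat.cast_smul_eq_nsmul ℤ, ← sub_eq_neg_add,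
      ← sub_smul, sub_self, zero_smul, zero_add] at this
  · rw [prim.lie_e_pow_succ_toEnd_f k]
    refine smul_ne_zero (mul_ne_zero (Nat.cast_add_one_ne_zero k) ?_)
      (prim.pow_toEnd_f_ne_zero_of_eq_nat rfl (by omega))
    rw [sub_ne_zero, Ne, Nat.cast_inj]
    omega

lemma lie_ne_zero_of_rootSpace_add_ne_bot {α β : Weight K H L} (hα : α.IsNonZero)
    (hβ : β.IsNonZero) (hαβ : rootSpace H (⇑α + ⇑β) ≠ ⊥) {x y : L}
    (hx : x ∈ rootSpace H α) (hx₀ : x ≠ 0) (hy : y ∈ rootSpace H β) (hy₀ : y ≠ 0) :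
    ⁅x, y⁆ ≠ 0 := by
  obtain ⟨x', hx', y', hy', hxy'⟩ := exists_lie_ne_zero_of_rootSpace_add_ne_bot hα hαβ
  obtain ⟨c, rfl⟩ := exists_smul_eq_of_mem_rootSpace hα hx hx₀ hx'
  obtain ⟨d, rfl⟩ := exists_smul_eq_of_mem_rootSpace hβ hy hy₀ hy'
  rw [smul_lie, lie_smul] at hxy'
  exact fun hxy ↦ hxy' (by rw [hxy, smul_zero, smul_zero])

lemma rootSpace_add_eq_span_lie {α β : Weight K H L} (hα : α.IsNonZero)
    (hsum : (⇑α + ⇑β : H → K) ≠ 0) :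
    (rootSpace H (⇑α + ⇑β) : Submodule K L) =
      Submodule.span K {z | ∃ x ∈ rootSpace H α, ∃ y ∈ rootSpace H β, z = ⁅x, y⁆} := by
  refine le_antisymm ?_ (Submodule.span_le.mpr ?_)
  · by_cases hbot : rootSpace H (⇑α + ⇑β) = ⊥
    · simp [hbot]
    obtain ⟨x, hx, y, hy, hxy⟩ := exists_lie_ne_zero_of_rootSpace_add_ne_bot hα hbot
    intro z hz
    obtain ⟨c, rfl⟩ := exists_smul_eq_of_mem_rootSpace (α := ⟨_, hbot⟩) hsum
      (lie_mem_genWeightSpace_of_mem_genWeightSpace hx hy) hxy hz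
    exact Submodule.smul_mem _ c (Submodule.subset_span ⟨x, hx, y, hy, rfl⟩)
  · rintro _ ⟨x, hx, y, hy, rfl⟩
    exact lie_mem_genWeightSpace_of_mem_genWeightSpace hx hy

lemma rootSpace_add_ne_bot_iff {α β : Weight K H L} (hα : α.IsNonZero) (hβ : β.IsNonZero) :
    rootSpace H (⇑α + ⇑β) ≠ ⊥ ↔
      ∀ x ∈ rootSpace H α, x ≠ 0 → ∀ y ∈ rootSpace H β, y ≠ 0 → ⁅x, y⁆ ≠ 0 := by
  refine ⟨fun hαβ _ hx hx₀ _ hy hy₀ ↦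
    lie_ne_zero_of_rootSpace_add_ne_bot hα hβ hαβ hx hx₀ hy hy₀, fun h ↦ ?_⟩
  obtain ⟨x, hx, hx₀⟩ := α.exists_ne_zero
  obtain ⟨y, hy, hy₀⟩ := β.exists_ne_zero
  intro hbot
  exact h x hx hx₀ y hy hy₀ <|
    (LieSubmodule.eq_bot_iff _).mp hbot _ (lie_mem_genWeightSpace_of_mem_genWeightSpace hx hy)

end LieAlgebra.IsKilling

/-- Let `μ` and `ν` be roots of a complex semisimple Lie algebra `g`
(with `μ + ν ≠ 0`).  Then `[g_μ, g_ν] = g_{μ+ν}` (where `g_{μ+ν} = 0` when `μ+ν`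
is not a root); in particular `μ + ν` is a root if and only if `⁅ζ, ξ⁆ ≠ 0` for
every nonzero `ζ ∈ g_μ` and every nonzero `ξ ∈ g_ν`. -/
theorem schur_flex_stmt2
    {L : Type*} [LieRing L] [LieAlgebra ℂ L] [FiniteDimensional ℂ L]
    [LieAlgebra.IsSemisimple ℂ L]
    (H : LieSubalgebra ℂ L) [H.IsCartanSubalgebra]
    (μ ν : LieModule.Weight ℂ H L) (hμ : μ.IsNonZero) (hν : ν.IsNonZero)
    (hsum : (⇑μ + ⇑ν : H → ℂ) ≠ 0) :
    (LieAlgebra.rootSpace H (⇑μ + ⇑ν) : Submodule ℂ L) =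
      Submodule.span ℂ {z : L | ∃ x ∈ LieAlgebra.rootSpace H ⇑μ,
        ∃ y ∈ LieAlgebra.rootSpace H ⇑ν, z = ⁅x, y⁆} ∧
    ((LieAlgebra.rootSpace H (⇑μ + ⇑ν) ≠ ⊥) ↔
      (∀ ζ ∈ LieAlgebra.rootSpace H ⇑μ, ζ ≠ 0 →
        ∀ ξ ∈ LieAlgebra.rootSpace H ⇑ν, ξ ≠ 0 → ⁅ζ, ξ⁆ ≠ 0)) :=
  ⟨LieAlgebra.IsKilling.rootSpace_add_eq_span_lie hμ hsum,
    LieAlgebra.IsKilling.rootSpace_add_ne_bot_iff hμ hν⟩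
end

section
/- Let λ be a size-n subset of {1, …, 2n} containing exactly one element of each pair {k, 2n+1−k}, listed in increasing order as λ₁ < ⋯ < λ_n. Decompose λ into maximal blocks of consecutive integers μ_p, …, μ₁, μ₀ (from smallest to largest values read as μ_p ⋯ μ₀ with μ_p containing λ₁). If λ₁ > 1 (equivalently λ_n = 2n), then for all ℓ, m with ℓ + m = p + 1, the last element of block μ_ℓ plus the last element of block μ_m equals 2n. -/
/-!
Since `1 ∉ λ`, symmetry puts `2n` in `λ`, where it ends the top block. The reflection
`x ↦ 2n - x` maps the other block ends to block ends: `x + 1 ∉ λ` forces `2n - x ∈ λ`, and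
`x ∈ λ` forces `2n - x + 1 ∉ λ`. A strictly antitone bijection of a finite set reverses its
sorted list, so the `i`-th and `j`-th of the remaining block ends sum to `2n` whenever
`i + j` is one less than their number.
-/

namespace Finset

variable {α : Type*} [LinearOrder α]

theorem sort_map_eq_reverse_of_strictAntiOn {s : Finset α} {f : α → α}
    (hf : StrictAntiOn f s) (himage : s.image f = s) :
    s.sort.map f = s.sort.reverse := by
  refine List.SortedGT.eq_reverse_of_mem_iff_of_sortedLT ?_ ?_ (sortedLT_sort s)
  · simpa [Finset.ext_iff] using himage
  · rw [List.sortedGT_iff_pairwise, List.pairwise_map]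
    refine (List.sortedLT_iff_pairwise.mp (sortedLT_sort s)).imp_of_mem ?_
    intro a b ha hb hab
    exact hf ((mem_sort _).mp ha) ((mem_sort _).mp hb) hab

theorem sort_insert_of_forall_lt {s : Finset α} {a : α} (h : ∀ b ∈ s, b < a) :
    (insert a s).sort = s.sort ++ [a] := by
  refine List.SortedLT.eq_of_mem_iff (sortedLT_sort _) ?_ (by simp [or_comm])
  rw [List.sortedLT_iff_pairwise, List.pairwise_append]
  refine ⟨List.sortedLT_iff_pairwise.mp (sortedLT_sort s), List.pairwise_singleton _ _, ?_⟩
  simpa using h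

theorem getElem_sort_add_getElem_sort_of_sub_mem {s : Finset ℕ} {c : ℕ}
    (hle : ∀ x ∈ s, x ≤ c) (hsub : ∀ x ∈ s, c - x ∈ s) {i j : ℕ}
    (hi : i < s.sort.length) (hj : j < s.sort.length) (hij : i + j + 1 = s.sort.length) :
    s.sort[i] + s.sort[j] = c := by
  have himage : s.image (c - ·) = s := by
    refine (image_subset_iff.mpr hsub).antisymm fun x hx => mem_image.mpr ⟨c - x, hsub x hx, ?_⟩
    have := hle x hx
    omega
  have hanti : StrictAntiOn (c - ·) (s : Set ℕ) := fun x hx y hy hxy => by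
    have := hle y hy
    simp only
    omega
  have hrefl := List.getElem_of_eq (sort_map_eq_reverse_of_strictAntiOn hanti himage)
    (by simpa using hi)
  simp only [List.getElem_map, List.getElem_reverse] at hrefl
  have := hle _ ((mem_sort _).mp (List.getElem_mem hi))
  have : s.sort.length - 1 - i = j := by omega
  simp only [this] at hrefl
  omega

end Finset

def blockEnds (S : Finset ℕ) : Finset ℕ := S.filter fun b => b + 1 ∉ S

theorem mem_blockEnds {S : Finset ℕ} {b : ℕ} : b ∈ blockEnds S ↔ b ∈ S ∧ b + 1 ∉ S :=
  Finset.mem_filter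

theorem blockEnds_subset (S : Finset ℕ) : blockEnds S ⊆ S :=
  Finset.filter_subset _ _

section Lagrangian

variable {n : ℕ} {S : Finset ℕ}

theorem two_mul_mem_blockEnds (hsub : ∀ j ∈ S, 1 ≤ j ∧ j ≤ 2 * n)
    (hsym : ∀ j, 1 ≤ j → j ≤ 2 * n → (j ∈ S ↔ (2 * n + 1 - j) ∉ S))
    (h1 : 1 ∉ S) (hn : 1 ≤ n) : 2 * n ∈ blockEnds S := by
  have htop := (hsym (2 * n) (by omega) le_rfl).mpr
  rw [show 2 * n + 1 - 2 * n = 1 by omega] at htop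
  exact mem_blockEnds.mpr ⟨htop h1, fun h => by have := (hsub _ h).2; omega⟩

theorem two_mul_sub_mem_blockEnds (hsub : ∀ j ∈ S, 1 ≤ j ∧ j ≤ 2 * n)
    (hsym : ∀ j, 1 ≤ j → j ≤ 2 * n → (j ∈ S ↔ (2 * n + 1 - j) ∉ S))
    {x : ℕ} (hx : x ∈ blockEnds S) (hlt : x < 2 * n) : 2 * n - x ∈ blockEnds S := by
  obtain ⟨hxS, hsucc⟩ := mem_blockEnds.mp hx
  have hx1 := (hsub x hxS).1
  have hmirror := (hsym (x + 1) (by omega) (by omega)).not.mp hsucc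
  have hmirror_succ := (hsym x hx1 hlt.le).mp hxS
  rw [not_not, show 2 * n + 1 - (x + 1) = 2 * n - x by omega] at hmirror
  rw [show 2 * n + 1 - x = 2 * n - x + 1 by omega] at hmirror_succ
  exact mem_blockEnds.mpr ⟨hmirror, hmirror_succ⟩

theorem two_mul_sub_mem_erase_blockEnds (hsub : ∀ j ∈ S, 1 ≤ j ∧ j ≤ 2 * n)
    (hsym : ∀ j, 1 ≤ j → j ≤ 2 * n → (j ∈ S ↔ (2 * n + 1 - j) ∉ S))
    {x : ℕ} (hx : x ∈ (blockEnds S).erase (2 * n)) :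
    2 * n - x ∈ (blockEnds S).erase (2 * n) := by
  obtain ⟨hne, hxB⟩ := Finset.mem_erase.mp hx
  have := hsub x (blockEnds_subset S hxB)
  exact Finset.mem_erase.mpr ⟨by omega, two_mul_sub_mem_blockEnds hsub hsym hxB (by omega)⟩

end Lagrangian

theorem schur_flex_stmt12_general (n : ℕ) (S : Finset ℕ)
    (hsub : ∀ j ∈ S, 1 ≤ j ∧ j ≤ 2 * n)
    (hsym : ∀ j, 1 ≤ j → j ≤ 2 * n → (j ∈ S ↔ (2 * n + 1 - j) ∉ S))
    (h1 : 1 ∉ S) :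
    ∀ i j : ℕ,
      i < (Finset.sort (S.filter fun b => b + 1 ∉ S) (· ≤ ·)).length →
      j < (Finset.sort (S.filter fun b => b + 1 ∉ S) (· ≤ ·)).length →
      i + j + 2 = (Finset.sort (S.filter fun b => b + 1 ∉ S) (· ≤ ·)).length →
      (Finset.sort (S.filter fun b => b + 1 ∉ S) (· ≤ ·)).getD i 0 +
        (Finset.sort (S.filter fun b => b + 1 ∉ S) (· ≤ ·)).getD j 0 = 2 * n := by
  change ∀ i j, i < (blockEnds S).sort.length → j < (blockEnds S).sort.length →
    i + j + 2 = (blockEnds S).sort.length →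
    (blockEnds S).sort.getD i 0 + (blockEnds S).sort.getD j 0 = 2 * n
  intro i j hi hj hij
  have hn : 1 ≤ n := by
    obtain ⟨x, hx⟩ := List.exists_mem_of_length_pos (by omega : 0 < (blockEnds S).sort.length)
    have := hsub x (blockEnds_subset S ((Finset.mem_sort _).mp hx))
    omega
  have hsplit : (blockEnds S).sort = ((blockEnds S).erase (2 * n)).sort ++ [2 * n] := by
    conv_lhs => rw [← Finset.insert_erase (two_mul_mem_blockEnds hsub hsym h1 hn)]
    refine Finset.sort_insert_of_forall_lt fun x hx => ?_
    have := hsub x (blockEnds_subset S (Finset.mem_of_mem_erase hx))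
    exact lt_of_le_of_ne this.2 (Finset.ne_of_mem_erase hx)
  simp only [hsplit, List.length_append, List.length_singleton] at hi hj hij ⊢
  rw [List.getD_append _ _ _ _ (by omega), List.getD_append _ _ _ _ (by omega),
    List.getD_eq_getElem _ _ (by omega), List.getD_eq_getElem _ _ (by omega)]
  exact Finset.getElem_sort_add_getElem_sort_of_sub_mem
    (fun x hx => (hsub x (blockEnds_subset S (Finset.mem_of_mem_erase hx))).2)
    (fun x hx => two_mul_sub_mem_erase_blockEnds hsub hsym hx) _ _ (by omega)

/-- Let `λ` (encoded as a finite set `S`) be a size-`n` subset of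
`{1, …, 2n}` containing exactly one element of each pair `{k, 2n+1−k}`, decomposed
into maximal blocks `μ_p, …, μ₁, μ₀` of consecutive integers (with `μ_p` containing
the smallest element).  Suppose `λ₁ > 1` (i.e. `1 ∉ S`).  Then for all `ℓ, m` with
`ℓ + m = p + 1`, the last element of `μ_ℓ` plus the last element of `μ_m` equals
`2n`.  Here the last elements of the blocks are exactly the `b ∈ S` with
`b + 1 ∉ S`, listed in increasing order as `l`, and the index pairing
`ℓ + m = p + 1` becomes `i + j + 2 = l.length` for the increasing list `l`. -/
theorem schur_flex_stmt12 (n : ℕ) (S : Finset ℕ)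
    (hcard : S.card = n)
    (hsub : ∀ j ∈ S, 1 ≤ j ∧ j ≤ 2 * n)
    (hsym : ∀ j, 1 ≤ j → j ≤ 2 * n → (j ∈ S ↔ (2 * n + 1 - j) ∉ S))
    (h1 : 1 ∉ S) :
    ∀ i j : ℕ,
      i < (Finset.sort (S.filter fun b => b + 1 ∉ S) (· ≤ ·)).length →
      j < (Finset.sort (S.filter fun b => b + 1 ∉ S) (· ≤ ·)).length →
      i + j + 2 = (Finset.sort (S.filter fun b => b + 1 ∉ S) (· ≤ ·)).length →
      (Finset.sort (S.filter fun b => b + 1 ∉ S) (· ≤ ·)).getD i 0 +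
        (Finset.sort (S.filter fun b => b + 1 ∉ S) (· ≤ ·)).getD j 0 = 2 * n :=
  schur_flex_stmt12_general n S hsub hsym h1
end
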